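/- arXiv:2204.11960 — 2 statements merged into one kernel-verified Lean document; each statement's English description precedes it below -/
import Mathlib

section
/- Every EGRS code of length n+1 ≤ q is a GRS code: Let 1 ≤ k ≤ n ≤ q−1, let α₁,…,αₙ ∈ F_q be pairwise distinct, v₁,…,vₙ ∈ F_q nonzero, and let γ ∈ F_q \ {α₁,…,αₙ}. Set βᵢ = (αᵢ−γ)⁻¹ and wᵢ = vᵢ(αᵢ−γ)^{k−1} for 1 ≤ i ≤ n, β_{n+1} = 0, w_{n+1} = 1. Then EGRS_{k,n}((α₁,…,αₙ),(v₁,…,vₙ)) = GRS_{k,n+1}((β₁,…,β_{n+1}),(w₁,…,w_{n+1})). -/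
/-!
Substitute `x = γ + 1 / y`. For `deg f ≤ k - 1`, the polynomial `g(y) = y ^ (k - 1) f(γ + 1 / y)`
again has degree `≤ k - 1`, satisfies `g((α - γ)⁻¹) = (α - γ) ^ (1 - k) f(α)`, which the weights
`(α - γ) ^ (k - 1)` undo, and `g(0)` is the coefficient of `x ^ (k - 1)` in `f`: the point at
infinity of the EGRS code becomes the evaluation point `0`. As `f ↦ g` is a bijection of the
polynomials of degree `≤ k - 1`, the two codes coincide.
-/

open Polynomial

/-- The generalized Reed-Solomon code: codewords `(v i * f (α i))_i` for `deg f ≤ k - 1`. -/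
def grsCode (F : Type) [Field F] (k n : ℕ) (α v : Fin n → F) : Set (Fin n → F) :=
  {c | ∃ f : F[X], f.degree < (k : WithBot ℕ) ∧ c = fun i => v i * f.eval (α i)}

/-- The extended generalized Reed-Solomon code: codewords
`(v 1 * f (α 1), …, v n * f (α n), f_{k-1})` for `deg f ≤ k - 1`. -/
def egrsCode (F : Type) [Field F] (k n : ℕ) (α v : Fin n → F) : Set (Fin (n + 1) → F) :=
  {c | ∃ f : F[X], f.degree < (k : WithBot ℕ) ∧
    c = Fin.snoc (fun i => v i * f.eval (α i)) (f.coeff (k - 1))}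

namespace Polynomial

section Semiring

variable {R : Type*} [Semiring R] {f : R[X]} {N : ℕ}

lemma degree_lt_succ_iff_natDegree_le :
    f.degree < ((N + 1 : ℕ) : WithBot ℕ) ↔ f.natDegree ≤ N := by
  rw [degree_lt_iff_coeff_zero, natDegree_le_iff_coeff_eq_zero]
  simp

lemma coeff_taylor_of_natDegree_le (r : R) (hf : f.natDegree ≤ N) :
    (taylor r f).coeff N = f.coeff N := by
  rcases hf.lt_or_eq with hlt | rfl
  · rw [coeff_eq_zero_of_natDegree_lt hlt,
      coeff_eq_zero_of_natDegree_lt ((natDegree_taylor f r).trans_lt hlt)]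
  · exact coeff_taylor_natDegree r f

end Semiring

section Field

variable {F : Type*} [Field F] {f g : F[X]} {N : ℕ}

lemma eval_inv_reflect_mul_pow {x : F} (hx : x ≠ 0) (hf : f.natDegree ≤ N) :
    (reflect N f).eval x⁻¹ * x ^ N = f.eval x := by
  have := invertibleOfNonzero hx
  rw [← invOf_eq_inv]
  exact eval₂_reflect_mul_pow (RingHom.id F) x N f hf

/-- `reflectTaylor N γ f` is `y ↦ y ^ N * f (γ + 1 / y)`. -/
noncomputable def reflectTaylor (N : ℕ) (γ : F) (f : F[X]) : F[X] :=
  reflect N (taylor γ f)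

variable (γ : F)

lemma natDegree_reflectTaylor_le (hf : f.natDegree ≤ N) :
    (reflectTaylor N γ f).natDegree ≤ N :=
  natDegree_reflect_le.trans (max_le le_rfl ((natDegree_taylor f γ).trans_le hf))

lemma eval_zero_reflectTaylor (hf : f.natDegree ≤ N) :
    (reflectTaylor N γ f).eval 0 = f.coeff N := by
  rw [← coeff_zero_eq_eval_zero, reflectTaylor, coeff_reflect, revAt_zero,
    coeff_taylor_of_natDegree_le γ hf]

lemma eval_inv_sub_reflectTaylor_mul_pow {x : F} (hx : x ≠ γ) (hf : f.natDegree ≤ N) :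
    (reflectTaylor N γ f).eval (x - γ)⁻¹ * (x - γ) ^ N = f.eval x := by
  rw [reflectTaylor, eval_inv_reflect_mul_pow (sub_ne_zero.2 hx)
    ((natDegree_taylor f γ).trans_le hf), taylor_eval, sub_add_cancel]

lemma exists_reflectTaylor_eq (hg : g.natDegree ≤ N) :
    ∃ f : F[X], f.natDegree ≤ N ∧ reflectTaylor N γ f = g := by
  refine ⟨taylor (-γ) (reflect N g), ?_, ?_⟩
  · rw [natDegree_taylor]
    exact natDegree_reflect_le.trans (max_le le_rfl hg)
  · rw [reflectTaylor, taylor_taylor, add_neg_cancel, taylor_zero, reflect_reflect]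

end Field

end Polynomial

lemma egrs_codeword_eq_grs_codeword {F : Type*} [Field F] {n N : ℕ} (α v : Fin n → F) {γ : F}
    (hγ : ∀ i, γ ≠ α i) {f : F[X]} (hf : f.natDegree ≤ N) :
    (Fin.snoc (fun i => v i * f.eval (α i)) (f.coeff N) : Fin (n + 1) → F) =
      fun i => (Fin.snoc (fun i => v i * (α i - γ) ^ N) 1 : Fin (n + 1) → F) i *
        (reflectTaylor N γ f).eval
          ((Fin.snoc (fun i => (α i - γ)⁻¹) 0 : Fin (n + 1) → F) i) := by
  funext i
  refine Fin.lastCases ?_ (fun i => ?_) i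
  · simp only [Fin.snoc_last, one_mul, eval_zero_reflectTaylor γ hf]
  · simp only [Fin.snoc_castSucc]
    rw [← eval_inv_sub_reflectTaylor_mul_pow γ (hγ i).symm hf]
    ring

theorem stmt5_general (F : Type) [Field F] (k n : ℕ) (hk : 1 ≤ k) (α v : Fin n → F)
    (γ : F) (hγ : ∀ i, γ ≠ α i) :
    egrsCode F k n α v =
      grsCode F k (n + 1) (Fin.snoc (fun i => (α i - γ)⁻¹) 0)
        (Fin.snoc (fun i => v i * (α i - γ) ^ (k - 1)) 1) := by
  obtain ⟨N, rfl⟩ : ∃ N, k = N + 1 := ⟨k - 1, by omega⟩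
  ext c
  simp only [egrsCode, grsCode, degree_lt_succ_iff_natDegree_le, Nat.add_sub_cancel,
    Set.mem_ofPred_eq]
  constructor
  · rintro ⟨f, hf, rfl⟩
    exact ⟨reflectTaylor N γ f, natDegree_reflectTaylor_le γ hf,
      egrs_codeword_eq_grs_codeword α v hγ hf⟩
  · rintro ⟨g, hg, rfl⟩
    obtain ⟨f, hf, rfl⟩ := exists_reflectTaylor_eq γ hg
    exact ⟨f, hf, (egrs_codeword_eq_grs_codeword α v hγ hf).symm⟩

theorem stmt5 (F : Type) [Field F] [Fintype F] (k n : ℕ)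
    (hk : 1 ≤ k) (hkn : k ≤ n) (hq : n + 1 ≤ Fintype.card F)
    (α v : Fin n → F) (hα : Function.Injective α) (hv : ∀ i, v i ≠ 0)
    (γ : F) (hγ : ∀ i, γ ≠ α i) :
    egrsCode F k n α v =
      grsCode F k (n + 1) (Fin.snoc (fun i => (α i - γ)⁻¹) 0)
        (Fin.snoc (fun i => v i * (α i - γ) ^ (k - 1)) 1) :=
  stmt5_general F k n hk α v γ hγ
end

section
/- Main equivalence theorem: A linear code C ⊆ F_q^n with 2 ≤ n ≤ q is a GRS code if and only if it is an EGRS code. Equivalently, the family of all GRS codes over F_q of length ≥ 2 equals the family of all EGRS codes over F_q of length ≤ q. -/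
open Polynomial

/-! For a field `F` and `n : ℕ`, the substitution `x ↦ a + 1/(x - b)` followed by clearing
denominators, `f ↦ g = c (X - b)ⁿ f(a + 1/(X - b))`, is a bijection of the polynomials of degree
`≤ n`. If `(α - a)(β - b) = 1` then `g(β) = c (β - b)ⁿ f(α)`, while the coefficient of `Xⁿ` in `g`
is `c f(a)`. So the GRS code with evaluation points `α₁, …, αₘ, a` is the EGRS code with points
`βᵢ = b + 1/(αᵢ - a)`: the point `a` moves to infinity. Conversely, an EGRS code of length
`m + 1 ≤ q` has fewer than `q` points `βᵢ`, so some `b` avoids them all and the point at infinity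
can be brought back to `a`. -/

namespace Polynomial

section Semiring

variable {R : Type*} [Semiring R]

theorem degree_lt_succ_iff_natDegree_le_s6 {p : R[X]} {n : ℕ} :
    p.degree < ((n + 1 : ℕ) : WithBot ℕ) ↔ p.natDegree ≤ n := by
  rcases eq_or_ne p 0 with rfl | hp
  · simp
  · rw [← natDegree_lt_iff_degree_lt hp, Nat.lt_succ_iff]

theorem natDegree_reflect_le_of_le {p : R[X]} {N : ℕ} (h : p.natDegree ≤ N) :
    (reflect N p).natDegree ≤ N :=
  natDegree_reflect_le.trans (max_le le_rfl h)

theorem coeff_taylor_of_natDegree_le_s6 {p : R[X]} {n : ℕ} (h : p.natDegree ≤ n) (r : R) :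
    (taylor r p).coeff n = p.coeff n := by
  rcases h.eq_or_lt with rfl | h
  · exact coeff_taylor_natDegree r p
  · rw [coeff_eq_zero_of_natDegree_lt h,
      coeff_eq_zero_of_natDegree_lt (by rwa [natDegree_taylor])]

end Semiring

variable {F : Type*} [Field F]

theorem eval_reflect_of_natDegree_le {p : F[X]} {N : ℕ} (h : p.natDegree ≤ N) {x : F}
    (hx : x ≠ 0) : (reflect N p).eval x = x ^ N * p.eval x⁻¹ := by
  let _ : Invertible x⁻¹ := invertibleOfNonzero (inv_ne_zero hx)
  have key := eval₂_reflect_mul_pow (RingHom.id F) x⁻¹ N p h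
  rw [invOf_eq_inv, inv_inv] at key
  simp only [eval₂_id] at key
  rw [← key, mul_left_comm, ← mul_pow, mul_inv_cancel₀ hx, one_pow, mul_one]

/-- Since `taylor r f = f(X + r)` and `reflect n f = Xⁿ f(1/X)` for `deg f ≤ n`, this is
`c (X - b)ⁿ f(a + 1/(X - b))`. -/
noncomputable def mobiusTransform (n : ℕ) (a b c : F) (f : F[X]) : F[X] :=
  C c * taylor (-b) (reflect n (taylor a f))

variable {n : ℕ} {a b c : F} {f : F[X]}

theorem natDegree_mobiusTransform_le (hf : f.natDegree ≤ n) :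
    (mobiusTransform n a b c f).natDegree ≤ n := by
  refine natDegree_C_mul_le _ _ |>.trans ?_
  rw [natDegree_taylor]
  exact natDegree_reflect_le_of_le (by rwa [natDegree_taylor])

theorem coeff_mobiusTransform (hf : f.natDegree ≤ n) :
    (mobiusTransform n a b c f).coeff n = c * f.eval a := by
  have hr : (reflect n (taylor a f)).natDegree ≤ n :=
    natDegree_reflect_le_of_le (by rwa [natDegree_taylor])
  rw [mobiusTransform, coeff_C_mul, coeff_taylor_of_natDegree_le_s6 hr, coeff_reflect,
    revAt_le le_rfl, Nat.sub_self, taylor_coeff_zero]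

theorem eval_mobiusTransform (hf : f.natDegree ≤ n) {x y : F} (hxy : (y - a) * (x - b) = 1) :
    (mobiusTransform n a b c f).eval x = c * (x - b) ^ n * f.eval y := by
  have hx : x - b ≠ 0 := right_ne_zero_of_mul_eq_one hxy
  have hy : y = (x - b)⁻¹ + a := by rw [← eq_inv_of_mul_eq_one_left hxy]; ring
  rw [mobiusTransform, eval_mul, eval_C, taylor_eval, ← sub_eq_add_neg,
    eval_reflect_of_natDegree_le (by rwa [natDegree_taylor]) hx, taylor_eval, hy, mul_assoc]

theorem mobiusTransform_mobiusTransform (hc : c ≠ 0) :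
    mobiusTransform n b a c⁻¹ (mobiusTransform n a b c f) = f := by
  simp only [mobiusTransform, taylor_mul, taylor_C, taylor_taylor, reflect_C_mul,
    reflect_reflect, neg_add_cancel, add_neg_cancel, taylor_zero, ← mul_assoc, ← C_mul,
    inv_mul_cancel₀ hc, C_1, one_mul]

end Polynomial

section Codes

variable {F : Type} [Field F] {n m : ℕ}

theorem grsCodeword_snoc_eq_egrsCodeword {α β v w : Fin m → F} {a b c : F}
    (hαβ : ∀ i, (α i - a) * (β i - b) = 1) (hvw : ∀ i, v i = w i * (c * (β i - b) ^ n))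
    {f : F[X]} (hf : f.natDegree ≤ n) :
    (fun j => Fin.snoc v c j * f.eval (Fin.snoc α a j)) =
      Fin.snoc (fun i => w i * (mobiusTransform n a b c f).eval (β i))
        ((mobiusTransform n a b c f).coeff n) := by
  funext j
  induction j using Fin.lastCases with
  | last => simp only [Fin.snoc_last, coeff_mobiusTransform hf]
  | cast i =>
    simp only [Fin.snoc_castSucc, eval_mobiusTransform hf (hαβ i), hvw, mul_assoc]

theorem egrsCode_eq_grsCode_snoc {α β v w : Fin m → F} {a b c : F} (hc : c ≠ 0)
    (hαβ : ∀ i, (α i - a) * (β i - b) = 1) (hvw : ∀ i, v i = w i * (c * (β i - b) ^ n)) :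
    egrsCode F (n + 1) m β w = grsCode F (n + 1) (m + 1) (Fin.snoc α a) (Fin.snoc v c) := by
  ext x
  simp only [egrsCode, grsCode, Set.mem_ofPred_eq, Nat.add_sub_cancel,
    degree_lt_succ_iff_natDegree_le_s6]
  constructor
  · rintro ⟨g, hg, rfl⟩
    have hg' : mobiusTransform n a b c (mobiusTransform n b a c⁻¹ g) = g := by
      simpa using mobiusTransform_mobiusTransform (n := n) (a := b) (b := a) (f := g)
        (inv_ne_zero hc)
    refine ⟨mobiusTransform n b a c⁻¹ g, natDegree_mobiusTransform_le hg, ?_⟩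
    rw [grsCodeword_snoc_eq_egrsCodeword hαβ hvw (natDegree_mobiusTransform_le hg), hg']
  · rintro ⟨f, hf, rfl⟩
    exact ⟨_, natDegree_mobiusTransform_le hf, grsCodeword_snoc_eq_egrsCodeword hαβ hvw hf⟩

theorem exists_grsCode_eq_egrsCode {α v : Fin (m + 1) → F} (hα : Function.Injective α)
    (hv : ∀ i, v i ≠ 0) :
    ∃ β w : Fin m → F, Function.Injective β ∧ (∀ i, w i ≠ 0) ∧
      grsCode F (n + 1) (m + 1) α v = egrsCode F (n + 1) m β w := by
  set a := α (Fin.last m)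
  set c := v (Fin.last m)
  have hαa : ∀ i : Fin m, α i.castSucc - a ≠ 0 := fun i =>
    sub_ne_zero.mpr (hα.ne (Fin.castSucc_lt_last i).ne)
  have hcβ : ∀ i : Fin m, c * (α i.castSucc - a)⁻¹ ^ n ≠ 0 := fun i =>
    mul_ne_zero (hv _) (pow_ne_zero _ (inv_ne_zero (hαa i)))
  refine ⟨fun i => (α i.castSucc - a)⁻¹, fun i => v i.castSucc / (c * (α i.castSucc - a)⁻¹ ^ n),
    inv_injective.comp <| (sub_left_injective.comp hα).comp (Fin.castSucc_injective m),
    fun i => div_ne_zero (hv _) (hcβ i), ?_⟩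
  rw [egrsCode_eq_grsCode_snoc (α := Fin.init α) (v := Fin.init v) (a := a) (b := 0) (c := c)
    (hv _) (fun i => by simp [Fin.init, hαa i])
    (fun i => by rw [sub_zero, div_mul_cancel₀ _ (hcβ i)]; rfl),
    Fin.snoc_init_self, Fin.snoc_init_self]

theorem exists_egrsCode_eq_grsCode [Fintype F] (hq : m < Fintype.card F) {β w : Fin m → F}
    (hβ : Function.Injective β) (hw : ∀ i, w i ≠ 0) :
    ∃ α v : Fin (m + 1) → F, Function.Injective α ∧ (∀ i, v i ≠ 0) ∧
      egrsCode F (n + 1) m β w = grsCode F (n + 1) (m + 1) α v := by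
  obtain ⟨b, hb⟩ : ∃ b, b ∉ Set.range β := by
    by_contra! h
    exact hq.not_ge (by simpa using Fintype.card_le_of_surjective β h)
  have hβb : ∀ i, β i - b ≠ 0 := fun i => sub_ne_zero.mpr fun h => hb ⟨i, h⟩
  refine ⟨Fin.snoc (fun i => (β i - b)⁻¹) 0, Fin.snoc (fun i => w i * (β i - b) ^ n) 1,
    Fin.snoc_injective_of_injective (inv_injective.comp (sub_left_injective.comp hβ)) ?_, ?_,
    egrsCode_eq_grsCode_snoc (b := b) one_ne_zero (fun i => by simp [hβb i])
      fun _ => by rw [one_mul]⟩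
  · rintro ⟨i, hi⟩
    exact inv_ne_zero (hβb i) hi
  · intro j
    induction j using Fin.lastCases with
    | last => simp
    | cast i => simp [hw i, hβb i]

end Codes

theorem stmt6_general (F : Type) [Field F] [Fintype F] (m : ℕ)
    (hq : m + 1 ≤ Fintype.card F) (Co : Set (Fin (m + 1) → F)) :
    (∃ (k : ℕ) (α v : Fin (m + 1) → F), 1 ≤ k ∧ k ≤ m + 1 ∧
        Function.Injective α ∧ (∀ i, v i ≠ 0) ∧ Co = grsCode F k (m + 1) α v) ↔
      (∃ (k : ℕ) (β w : Fin m → F), 1 ≤ k ∧ k ≤ m + 1 ∧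
        Function.Injective β ∧ (∀ i, w i ≠ 0) ∧ Co = egrsCode F k m β w) := by
  constructor
  · rintro ⟨_ | n, α, v, hk, hkm, hα, hv, rfl⟩
    · omega
    obtain ⟨β, w, hβ, hw, hCo⟩ := exists_grsCode_eq_egrsCode (n := n) hα hv
    exact ⟨n + 1, β, w, hk, hkm, hβ, hw, hCo⟩
  · rintro ⟨_ | n, β, w, hk, hkm, hβ, hw, rfl⟩
    · omega
    obtain ⟨α, v, hα, hv, hCo⟩ := exists_egrsCode_eq_grsCode (n := n) hq hβ hw
    exact ⟨n + 1, α, v, hk, hkm, hα, hv, hCo⟩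

theorem stmt6 (F : Type) [Field F] [Fintype F] (m : ℕ) (hm : 1 ≤ m)
    (hq : m + 1 ≤ Fintype.card F) (Co : Set (Fin (m + 1) → F)) :
    (∃ (k : ℕ) (α v : Fin (m + 1) → F), 1 ≤ k ∧ k ≤ m + 1 ∧
        Function.Injective α ∧ (∀ i, v i ≠ 0) ∧ Co = grsCode F k (m + 1) α v) ↔
      (∃ (k : ℕ) (β w : Fin m → F), 1 ≤ k ∧ k ≤ m + 1 ∧
        Function.Injective β ∧ (∀ i, w i ≠ 0) ∧ Co = egrsCode F k m β w) :=
  stmt6_general F m hq Co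
end
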